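/- Let 𝒫 = P ∧ M_1 ∧ ⋯ ∧ M_N be a PB(AMO) constraint with P: ∑ q_i·x_i ≤ K, q_i ≥ 1, and partition 𝒳 = {X_1,…,X_N} with X_i = scope(M_i). Then the conjunction of the Generalized Global Polynomial Watchdog encoding GGPW(P,𝒳) with any CC encoding of M_1 ∧ ⋯ ∧ M_N (over disjoint auxiliary variables) is a CC encoding of 𝒫. -/

import Mathlib

/-- A literal is a Boolean variable together with a polarity
(`(v, true)` is the literal `v`, `(v, false)` is `¬v`). -/
abbrev Lit (V : Type) := V × Bool

/-- A clause is a finite disjunction (list) of literals. -/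
abbrev Clause (V : Type) := List (Lit V)

/-- A CNF formula is a set of clauses. -/
abbrev CnfForm (V : Type) := Set (Clause V)

/-- Negation of a literal. -/
def negLit {V : Type} (l : Lit V) : Lit V := (l.1, !l.2)

/-- An assignment `B` satisfies a literal. -/
def satLit {V : Type} (B : V → Bool) (l : Lit V) : Prop := B l.1 = l.2

/-- An assignment satisfies a clause if it makes some literal of it true. -/
def satClause {V : Type} (B : V → Bool) (C : Clause V) : Prop := ∃ l ∈ C, satLit B l

/-- An assignment satisfies a CNF formula if it satisfies all of its clauses. -/
def satCnf {V : Type} (B : V → Bool) (F : CnfForm V) : Prop := ∀ C ∈ F, satClause B C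

/-- The set of variables occurring in a CNF formula. -/
def cnfVars {V : Type} (F : CnfForm V) : Set V := {v | ∃ C ∈ F, ∃ b, (v, b) ∈ C}
/-- A partial assignment (a set of literals) is consistent if it contains no
complementary pair of literals. -/
def PAConsistent {V : Type} (A : Set (Lit V)) : Prop :=
  ∀ v : V, ¬ ((v, true) ∈ A ∧ (v, false) ∈ A)

/-- A total assignment `B` extends a partial assignment `A`. -/
def ExtendsPA {V : Type} (A : Set (Lit V)) (B : V → Bool) : Prop := ∀ l ∈ A, B l.1 = l.2

/-- A partial assignment mentions only variables in the set `S`. -/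
def OverScope {V : Type} (A : Set (Lit V)) (S : Set V) : Prop := ∀ l ∈ A, l.1 ∈ S

/-- Unit propagation closure: the least set of literals containing `A` and closed
under the rule: if all literals of some clause of `F` except one are complemented
in the set, the remaining literal is added. -/
inductive UP {V : Type} (F : CnfForm V) (A : Set (Lit V)) : Lit V → Prop where
  | base {l : Lit V} : l ∈ A → UP F A l
  | unit {C : Clause V} {l : Lit V} : C ∈ F → l ∈ C →
      (∀ l' ∈ C, l' ≠ l → UP F A (negLit l')) → UP F A l

/-- Unit propagation of `A` on `F` falsifies some clause: some clause of `F` has all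
of its literals complemented in the closure. -/
def UPFalsifies {V : Type} (F : CnfForm V) (A : Set (Lit V)) : Prop :=
  ∃ C ∈ F, ∀ l ∈ C, UP F A (negLit l)

/-- `F` is an encoding of the Boolean function `sat` (whose variables are `scope`):
an assignment of the variables of the constraint satisfies it iff it can be extended
to a satisfying assignment of `F`. -/
def IsEncoding {V : Type} (F : CnfForm V) (scope : Set V) (sat : (V → Bool) → Prop) : Prop :=
  ∀ B : V → Bool, sat B ↔ ∃ B' : V → Bool, (∀ v ∈ scope, B' v = B v) ∧ satCnf B' F

/-- `F` is a consistency-checking (CC) encoding of the constraint `sat` with scope `scope`. -/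
def IsCC {V : Type} (F : CnfForm V) (scope : Set V) (sat : (V → Bool) → Prop) : Prop :=
  IsEncoding F scope sat ∧
  ∀ A : Set (Lit V), PAConsistent A → OverScope A scope →
    (¬ ∃ B : V → Bool, ExtendsPA A B ∧ sat B) → UPFalsifies F A

/-- `F` is a generalized arc consistent (GAC) encoding of the constraint `sat`:
whenever a variable of the constraint takes the same value `b` in every extension of a
partial assignment `A` satisfying the constraint, unit propagating `A` on `F` adds the
corresponding literal. -/
def IsGAC {V : Type} (F : CnfForm V) (scope : Set V) (sat : (V → Bool) → Prop) : Prop :=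
  IsEncoding F scope sat ∧
  ∀ A : Set (Lit V), PAConsistent A → OverScope A scope →
    ∀ v ∈ scope, ∀ b : Bool,
      (∀ B : V → Bool, ExtendsPA A B → sat B → B v = b) → UP F A (v, b)

/-- SAT variables of the GGPW encoding: input variables `x l`; the variables
`y i r` of the groups; the output variables `tot r p k` (output `k` of the subtree
at path `p` of the totalizer `φ(⟨B_r⟩)`); and the output variables `s r k`
(bit `k` of the unary number `S_r`, for `r ≥ 1`). -/
inductive GVar (n N : ℕ) : Type where
  | x : Fin n → GVar n N
  | y : Fin N → ℕ → GVar n N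
  | tot : ℕ → List Bool → ℕ → GVar n N
  | s : ℕ → ℕ → GVar n N

/-- Binary trees used for the totalizers; a leaf carries an input, which is either
a variable (`some v`) or the constant 1 (`none`). -/
inductive TTree (α : Type) : Type where
  | leaf : α → TTree α
  | node : TTree α → TTree α → TTree α

def TTree.size {α : Type} : TTree α → ℕ
  | .leaf _ => 1
  | .node L R => L.size + R.size

def TTree.leafMS {α : Type} : TTree α → Multiset α
  | .leaf a => {a}
  | .node L R => L.leafMS + R.leafMS

def TTree.sub {α : Type} : List Bool → TTree α → Option (TTree α)
  | [], t => some t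
  | _ :: _, .leaf _ => none
  | b :: p, .node L R => TTree.sub p (if b then R else L)

/-- Extended literals: the constants true and false, or an ordinary literal. -/
inductive ELit (V : Type) : Type where
  | tru : ELit V
  | fls : ELit V
  | lit : V → Bool → ELit V

def ELit.neg {V : Type} : ELit V → ELit V
  | .tru => .fls
  | .fls => .tru
  | .lit v b => .lit v (!b)

/-- Build a clause from a list of extended literals: constant-false literals are
omitted, and a clause containing a constant-true literal is dropped (`none`). -/
def mkClause {V : Type} : List (ELit V) → Option (Clause V)
  | [] => some []
  | .tru :: _ => none
  | .fls :: ls => mkClause ls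
  | .lit v b :: ls => (mkClause ls).map (fun C => (v, b) :: C)

/-- The `k`-th output (unary, `k ≥ 1`) of the subtree `t` at path `p` of the
totalizer for bucket `r`: `k = 0` is the constant true, `k > size` is the constant
false, the output of a leaf is its input, and the outputs of internal nodes are the
variables `tot r p k`. -/
def outE {n N : ℕ} (r : ℕ) (p : List Bool) (t : TTree (Option (GVar n N)))
    (k : ℕ) : ELit (GVar n N) :=
  if k = 0 then .tru
  else if t.size < k then .fls
  else match t with
    | .leaf (some v) => .lit v true
    | .leaf none => .tru
    | .node _ _ => .lit (GVar.tot r p k) true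

/-- The length (number of unary bits) of `S_r`:  `S_0 = U(⟨B_0⟩)`, and
`S_r` is the sum of `U(⟨B_r⟩)` and `S_{r-1}^{1/2}` (every second bit of `S_{r-1}`). -/
def lenS {n N : ℕ} (τ : ℕ → TTree (Option (GVar n N))) : ℕ → ℕ
  | 0 => (τ 0).size
  | r + 1 => (τ (r + 1)).size + lenS τ r / 2

/-- The `k`-th bit of the unary number `S_r`. -/
def SE {n N : ℕ} (τ : ℕ → TTree (Option (GVar n N))) (r k : ℕ) : ELit (GVar n N) :=
  if k = 0 then .tru
  else if lenS τ r < k then .fls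
  else match r with
    | 0 => outE 0 [] (τ 0) k
    | r' + 1 => .lit (GVar.s (r' + 1) k) true

/-- The bucket `B_r` (as a multiset of inputs): the variable `y i r` for every
group `i` containing some variable whose coefficient has bit `r` set, plus the
constant 1 if bit `r` of `T` is 1. -/
def bucket {n N : ℕ} (q : Fin n → ℕ) (grp : Fin n → Fin N) (T r : ℕ) :
    Multiset (Option (GVar n N)) :=
  ((Finset.univ.filter (fun i : Fin N => ∃ l, grp l = i ∧ (q l).testBit r)).val.map
      (fun i => some (GVar.y i r)))
    + (if T.testBit r then ({none} : Multiset (Option (GVar n N))) else 0)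

/-- The clauses of the Generalized Global Polynomial Watchdog encoding
`PW(P,𝒳) ∧ ¬w`, where `τ r` is the binary tree of the totalizer `φ(⟨B_r⟩)`:
the defining clauses of the variables `y i r`; the totalizer clauses (both
directions, forcing the outputs of each internal node to be the unary sum of the
outputs of its children); the unary-adder clauses of
`ψ(U(⟨B_r⟩), S_{r-1}^{1/2})` (both directions); and the unit clause `¬w`, where
`w` is the `m`-th bit of `S_p`. -/
def GGPW {n N : ℕ} (q : Fin n → ℕ) (grp : Fin n → Fin N) (p m : ℕ)
    (τ : ℕ → TTree (Option (GVar n N))) : CnfForm (GVar n N) :=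
  {C | -- clauses ¬x_l ∨ y_{i,r} whenever bit r of q_l is 1:
       (∃ (l : Fin n) (r : ℕ), r ≤ p ∧ (q l).testBit r ∧
          C = [(GVar.x l, false), (GVar.y (grp l) r, true)]) ∨
       -- totalizer clauses ¬l_α ∨ ¬r_β ∨ o_{α+β}:
       (∃ (r : ℕ) (pa : List Bool) (L R : TTree (Option (GVar n N))) (α β : ℕ),
          r ≤ p ∧ TTree.sub pa (τ r) = some (.node L R) ∧
          α ≤ L.size ∧ β ≤ R.size ∧
          mkClause [(outE r (pa ++ [false]) L α).neg, (outE r (pa ++ [true]) R β).neg,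
            outE r pa (.node L R) (α + β)] = some C) ∨
       -- totalizer clauses l_{α+1} ∨ r_{β+1} ∨ ¬o_{α+β+1}:
       (∃ (r : ℕ) (pa : List Bool) (L R : TTree (Option (GVar n N))) (α β : ℕ),
          r ≤ p ∧ TTree.sub pa (τ r) = some (.node L R) ∧
          α ≤ L.size ∧ β ≤ R.size ∧
          mkClause [outE r (pa ++ [false]) L (α + 1), outE r (pa ++ [true]) R (β + 1),
            (outE r pa (.node L R) (α + β + 1)).neg] = some C) ∨
       -- adder clauses ¬a_α ∨ ¬b_β ∨ s_{α+β}, where a = U(⟨B_r⟩), b = S_{r-1}^{1/2}: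
       (∃ (r α β : ℕ), 1 ≤ r ∧ r ≤ p ∧
          α ≤ (τ r).size ∧ β ≤ lenS τ (r - 1) / 2 ∧
          mkClause [(outE r [] (τ r) α).neg, (SE τ (r - 1) (2 * β)).neg,
            SE τ r (α + β)] = some C) ∨
       -- adder clauses a_{α+1} ∨ b_{β+1} ∨ ¬s_{α+β+1}:
       (∃ (r α β : ℕ), 1 ≤ r ∧ r ≤ p ∧
          α ≤ (τ r).size ∧ β ≤ lenS τ (r - 1) / 2 ∧
          mkClause [outE r [] (τ r) (α + 1), SE τ (r - 1) (2 * (β + 1)),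
            (SE τ r (α + β + 1)).neg] = some C) ∨
       -- the unit clause ¬w:
       (mkClause [(SE τ p m).neg] = some C)}

/-!
STATEMENT 16.  Let `𝒫 = P ∧ M_1 ∧ ⋯ ∧ M_N` be a PB(AMO) constraint with
`P : ∑ qᵢ·xᵢ ≤ K`, `qᵢ ≥ 1`, and partition given by `grp`.  Rewrite `P` as
`T + ∑ qᵢ·xᵢ < m·2^p` with `p = ⌊log₂ max qᵢ⌋`, `T` the least nonnegative integer
such that `2^p ∣ K+1+T`, and `m = (K+1+T)/2^p`.  Then, for any choice of totalizer
trees `τ r` whose leaves are exactly the bucket `B_r`, the conjunction of the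
Generalized Global Polynomial Watchdog encoding `GGPW(P,𝒳)` with any CC encoding
`H` of `M_1 ∧ ⋯ ∧ M_N` (over disjoint auxiliary variables) is a CC encoding of `𝒫`.
-/
attribute [local instance] Classical.propDecidable

namespace Stmt16Aux

variable {V : Type}

theorem up_mono {F F' : CnfForm V} (h : F ⊆ F') {A : Set (Lit V)} {l : Lit V}
    (hUP : UP F A l) : UP F' A l := by
  induction hUP with
  | base hl => exact UP.base hl
  | unit hC hl _ ih => exact UP.unit (h hC) hl ih

theorem sat_of_up {F : CnfForm V} {B : V → Bool} (hF : satCnf B F) {A : Set (Lit V)}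
    (hA : ∀ l ∈ A, satLit B l) {l : Lit V} (h : UP F A l) : satLit B l := by
  induction h with
  | base hl => exact hA _ hl
  | @unit C l hC hl _ ih =>
    obtain ⟨l', hl', hsat⟩ := hF _ hC
    by_cases he : l' = l
    · exact he ▸ hsat
    · have h2 := ih l' hl' he
      simp only [satLit, negLit] at h2 hsat
      rw [hsat] at h2
      exact absurd h2 (by simp)

def EUP (F : CnfForm V) (A : Set (Lit V)) : ELit V → Prop
  | .tru => True
  | .fls => False
  | .lit v b => UP F A (v, b)

def evalE (B : V → Bool) : ELit V → Bool
  | .tru => true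
  | .fls => false
  | .lit v b => B v == b

@[simp] theorem neg_neg (e : ELit V) : e.neg.neg = e := by
  cases e <;> simp [ELit.neg]

theorem evalE_neg (B : V → Bool) (e : ELit V) : evalE B e.neg = !evalE B e := by
  cases e with
  | tru => rfl
  | fls => rfl
  | lit v b => cases hb : B v <;> cases b <;> simp [evalE, ELit.neg, hb]

theorem mkClause_sat {B : V → Bool} :
    ∀ {ls : List (ELit V)} {C : Clause V}, mkClause ls = some C →
      (∃ e ∈ ls, evalE B e = true) → satClause B C := by
  intro ls
  induction ls with
  | nil => intro C _ h; simp at h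
  | cons e ls ih =>
    intro C hC he
    cases e with
    | tru => simp [mkClause] at hC
    | fls =>
      simp only [mkClause] at hC
      refine ih hC ?_
      obtain ⟨e', he', hv⟩ := he
      rcases List.mem_cons.1 he' with h | h
      · subst h; simp [evalE] at hv
      · exact ⟨e', h, hv⟩
    | lit v b =>
      simp only [mkClause, Option.map_eq_some_iff] at hC
      obtain ⟨C', hC', rfl⟩ := hC
      obtain ⟨e', he', hv⟩ := he
      rcases List.mem_cons.1 he' with h | h
      · subst h
        exact ⟨(v, b), List.mem_cons_self, by simpa [evalE, satLit] using hv⟩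
      · obtain ⟨l, hl, hsat⟩ := ih hC' ⟨e', h, hv⟩
        exact ⟨l, List.mem_cons_of_mem _ hl, hsat⟩

theorem mkClause_mem :
    ∀ {ls : List (ELit V)} {C : Clause V} {v : V} {b : Bool}, mkClause ls = some C →
      (v, b) ∈ C → ELit.lit v b ∈ ls := by
  intro ls
  induction ls with
  | nil => intro C v b hC hm; simp [mkClause] at hC; subst hC; simp at hm
  | cons e ls ih =>
    intro C v b hC hm
    cases e with
    | tru => simp [mkClause] at hC
    | fls => simp only [mkClause] at hC; exact List.mem_cons_of_mem _ (ih hC hm)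
    | lit w c =>
      simp only [mkClause, Option.map_eq_some_iff] at hC
      obtain ⟨C', hC', rfl⟩ := hC
      rcases List.mem_cons.1 hm with h | h
      · rw [Prod.ext_iff] at h; obtain ⟨rfl, rfl⟩ := h; exact List.mem_cons_self
      · exact List.mem_cons_of_mem _ (ih hC' h)

theorem mkClause_mem' :
    ∀ {ls : List (ELit V)} {C : Clause V} {v : V} {b : Bool}, mkClause ls = some C →
      ELit.lit v b ∈ ls → (v, b) ∈ C := by
  intro ls
  induction ls with
  | nil => intro C v b _ hm; simp at hm
  | cons e ls ih =>
    intro C v b hC hm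
    cases e with
    | tru => simp [mkClause] at hC
    | fls =>
      simp only [mkClause] at hC
      rcases List.mem_cons.1 hm with h | h
      · exact absurd h (by simp)
      · exact ih hC h
    | lit w c =>
      simp only [mkClause, Option.map_eq_some_iff] at hC
      obtain ⟨C', hC', rfl⟩ := hC
      rcases List.mem_cons.1 hm with h | h
      · injection h with h1 h2; subst h1; subst h2; exact List.mem_cons_self
      · exact List.mem_cons_of_mem _ (ih hC' h)

theorem mkClause_isSome :
    ∀ (ls : List (ELit V)), (∀ e ∈ ls, e ≠ ELit.tru) → ∃ C, mkClause ls = some C := by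
  intro ls
  induction ls with
  | nil => intro _; exact ⟨[], rfl⟩
  | cons e ls ih =>
    intro h
    cases e with
    | tru => exact absurd rfl (h _ (List.mem_cons_self))
    | fls =>
      obtain ⟨C, hC⟩ := ih (fun e he => h e (List.mem_cons_of_mem _ he))
      exact ⟨C, by simpa [mkClause] using hC⟩
    | lit v b =>
      obtain ⟨C, hC⟩ := ih (fun e he => h e (List.mem_cons_of_mem _ he))
      exact ⟨(v, b) :: C, by simp [mkClause, hC]⟩

theorem up_clause {F : CnfForm V} {A : Set (Lit V)} {ls : List (ELit V)} {C : Clause V}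
    {u : V} {d : Bool} (h : mkClause ls = some C) (hC : C ∈ F)
    (hin : ELit.lit u d ∈ ls)
    (hoth : ∀ e ∈ ls, e ≠ ELit.lit u d → EUP F A e.neg) : UP F A (u, d) := by
  refine UP.unit hC (mkClause_mem' h hin) ?_
  rintro ⟨v, b⟩ hl' hne
  have hv : ELit.lit v b ∈ ls := mkClause_mem h hl'
  have hvne : ELit.lit v b ≠ ELit.lit u d := by
    intro hh; injection hh with h1 h2; exact hne (by rw [h1, h2])
  simpa [EUP, ELit.neg, negLit] using hoth _ hv hvne

theorem ne_fls_of_eup {F : CnfForm V} {A : Set (Lit V)} {e : ELit V} (h : EUP F A e) :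
    e ≠ ELit.fls := by
  intro hh; subst hh; exact h

theorem neg_ne_tru {e : ELit V} (h : e ≠ ELit.fls) : e.neg ≠ ELit.tru := by
  cases e <;> simp [ELit.neg] at h ⊢

theorem up_step3 {F : CnfForm V} {A : Set (Lit V)} {e1 e2 e3 : ELit V}
    (hmem : ∀ C, mkClause [e1.neg, e2.neg, e3] = some C → C ∈ F)
    (h1 : EUP F A e1) (h2 : EUP F A e2) (h3 : e3 ≠ ELit.fls) : EUP F A e3 := by
  cases e3 with
  | tru => trivial
  | fls => exact absurd rfl h3
  | lit u d =>
    obtain ⟨C, hC⟩ := mkClause_isSome [e1.neg, e2.neg, ELit.lit u d] (by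
      intro e he
      rcases List.mem_cons.1 he with rfl | he
      · exact neg_ne_tru (ne_fls_of_eup h1)
      rcases List.mem_cons.1 he with rfl | he
      · exact neg_ne_tru (ne_fls_of_eup h2)
      rcases List.mem_cons.1 he with rfl | he
      · simp
      · simp at he)
    refine up_clause hC (hmem _ hC) (by simp) ?_
    intro e he hne
    rcases List.mem_cons.1 he with rfl | he
    · simpa using h1
    rcases List.mem_cons.1 he with rfl | he
    · simpa using h2
    rcases List.mem_cons.1 he with rfl | he
    · exact absurd rfl hne
    · simp at he

theorem upfalsifies_of_unit {F : CnfForm V} {A : Set (Lit V)} {e : ELit V}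
    (hmem : ∀ C, mkClause [e.neg] = some C → C ∈ F) (he : EUP F A e) :
    UPFalsifies F A := by
  cases e with
  | tru => exact ⟨[], hmem [] (by simp [mkClause, ELit.neg]), by simp⟩
  | fls => exact he.elim
  | lit u d =>
    refine ⟨[(u, !d)], hmem _ (by simp [mkClause, ELit.neg]), ?_⟩
    rintro l hl
    rcases List.mem_cons.1 hl with rfl | hl
    · simpa [negLit, EUP] using he
    · simp at hl

end Stmt16Aux
namespace Stmt16Aux

variable {α : Type}

theorem card_leafMS (t : TTree α) : Multiset.card t.leafMS = t.size := by
  induction t with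
  | leaf a => rfl
  | node L R ihL ihR => simp [TTree.leafMS, TTree.size, ihL, ihR]

noncomputable def cntT (f : α → Prop) (t : TTree α) : ℕ := t.leafMS.countP f

theorem cntT_leaf (f : α → Prop) (a : α) : cntT f (.leaf a) = if f a then 1 else 0 := by
  show Multiset.countP f (a ::ₘ 0) = _
  rw [Multiset.countP_cons, Multiset.countP_zero, Nat.zero_add]

theorem cntT_node (f : α → Prop) (L R : TTree α) :
    cntT f (.node L R) = cntT f L + cntT f R := by
  simp [cntT, TTree.leafMS, Multiset.countP_add]

theorem cntT_le_size (f : α → Prop) (t : TTree α) : cntT f t ≤ t.size := by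
  rw [← card_leafMS]; exact Multiset.countP_le_card _ _

theorem sub_append (p1 p2 : List Bool) (t : TTree α) :
    TTree.sub (p1 ++ p2) t = (TTree.sub p1 t).bind (TTree.sub p2) := by
  induction p1 generalizing t with
  | nil => simp [TTree.sub]
  | cons b p1 ih =>
    cases t with
    | leaf a => simp [TTree.sub]
    | node L R => simpa [TTree.sub] using ih _

theorem sub_child {pa : List Bool} {t L R : TTree α} (h : TTree.sub pa t = some (.node L R))
    (b : Bool) : TTree.sub (pa ++ [b]) t = some (if b then R else L) := by
  rw [sub_append, h]
  cases b <;> rfl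

theorem sub_leafMS_le : ∀ (pa : List Bool) (t t' : TTree α),
    TTree.sub pa t = some t' → t'.leafMS ≤ t.leafMS := by
  intro pa
  induction pa with
  | nil => intro t t' h; cases h; exact le_refl _
  | cons b pa ih =>
    intro t t' h
    cases t with
    | leaf a => simp [TTree.sub] at h
    | node L R =>
      simp only [TTree.sub] at h
      cases b with
      | false => exact (ih _ _ h).trans (by simp [TTree.leafMS])
      | true => exact (ih _ _ h).trans (by simp [TTree.leafMS])

def dval (c : ℕ → ℕ) : ℕ → ℕ
  | 0 => c 0
  | r + 1 => c (r + 1) + dval c r / 2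

theorem dval_eq (c : ℕ → ℕ) (r : ℕ) :
    dval c r = (∑ j ∈ Finset.range (r + 1), 2 ^ j * c j) / 2 ^ r := by
  induction r with
  | zero => simp [dval]
  | succ r ih =>
    rw [dval, ih, Nat.div_div_eq_div_mul, ← pow_succ]
    conv_rhs => rw [Finset.sum_range_succ]
    have h0 : 0 < 2 ^ (r + 1) := Nat.pow_pos (by norm_num)
    rw [Nat.add_mul_div_left _ _ h0, Nat.add_comm]

theorem dval_mono {c c' : ℕ → ℕ} (h : ∀ j, c j ≤ c' j) (r : ℕ) : dval c r ≤ dval c' r := by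
  induction r with
  | zero => exact h 0
  | succ r ih => exact Nat.add_le_add (h _) (Nat.div_le_div_right ih)

end Stmt16Aux
namespace Stmt16Aux

theorem bitsum_mod (x : ℕ) : ∀ k : ℕ,
    (∑ j ∈ Finset.range k, 2 ^ j * (if x.testBit j then 1 else 0)) = x % 2 ^ k := by
  intro k
  induction k with
  | zero => simp [Nat.mod_one]
  | succ k ih =>
    rw [Finset.sum_range_succ, ih]
    have h1 : (if x.testBit k then 1 else 0) = x / 2 ^ k % 2 := by
      rw [Nat.testBit_eq_decide_div_mod_eq]
      rcases Nat.mod_two_eq_zero_or_one (x / 2 ^ k) with h | h <;> simp [h]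
    have h2 : x % 2 ^ (k + 1) = x % 2 ^ k + 2 ^ k * (x / 2 ^ k % 2) := by
      conv_lhs => rw [pow_succ, Nat.mod_mul]
    rw [h1]; exact h2.symm

theorem bitsum {x k : ℕ} (h : x < 2 ^ k) :
    (∑ j ∈ Finset.range k, 2 ^ j * (if x.testBit j then 1 else 0)) = x := by
  rw [bitsum_mod, Nat.mod_eq_of_lt h]

end Stmt16Aux
namespace Stmt16Aux
variable {n N : ℕ}

theorem outE_zero (r : ℕ) (pa : List Bool) (t : TTree (Option (GVar n N))) :
    outE r pa t 0 = .tru := by simp [outE]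

theorem outE_leaf_some (r : ℕ) (pa : List Bool) (v : GVar n N) :
    outE r pa (.leaf (some v)) 1 = .lit v true := by simp [outE, TTree.size]

theorem outE_leaf_none (r : ℕ) (pa : List Bool) :
    outE r pa (.leaf (none : Option (GVar n N))) 1 = .tru := by simp [outE, TTree.size]

theorem outE_node (r : ℕ) (pa : List Bool) (L R : TTree (Option (GVar n N))) (k : ℕ)
    (h1 : 1 ≤ k) (h2 : k ≤ (TTree.node L R).size) :
    outE r pa (.node L R) k = .lit (GVar.tot r pa k) true := by
  have hk0 : ¬ k = 0 := by omega
  rw [outE.eq_def]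
  simp [Nat.not_lt.2 h2, hk0]

theorem outE_big (r : ℕ) (pa : List Bool) (t : TTree (Option (GVar n N))) (k : ℕ)
    (h1 : 1 ≤ k) (h2 : t.size < k) : outE r pa t k = .fls := by
  have hk0 : ¬ k = 0 := by omega
  rw [outE.eq_def]
  simp [h2, hk0]

theorem outE_ne_fls {r : ℕ} {pa : List Bool} {t : TTree (Option (GVar n N))} {k : ℕ}
    (h : k ≤ t.size) : outE r pa t k ≠ .fls := by
  rw [outE.eq_def]
  rcases Nat.eq_zero_or_pos k with rfl | hk
  · simp
  · simp only [Nat.not_lt.2 h, if_neg (by omega : ¬ k = 0), if_false]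
    cases t with
    | leaf a => cases a <;> simp
    | node L R => simp

theorem size_pos (t : TTree (Option (GVar n N))) : 1 ≤ t.size := by
  induction t with
  | leaf a => exact le_refl _
  | node L R ihL ihR => simp [TTree.size]; omega

end Stmt16Aux
namespace Stmt16Aux
variable {n N : ℕ}

theorem SE_zero' (τ : ℕ → TTree (Option (GVar n N))) (r : ℕ) (k : ℕ) (hk : k = 0) :
    SE τ r k = .tru := by rw [SE.eq_def, hk]; simp

theorem lenS_zero (τ : ℕ → TTree (Option (GVar n N))) : lenS τ 0 = (τ 0).size := rfl

theorem lenS_succ (τ : ℕ → TTree (Option (GVar n N))) (r : ℕ) :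
    lenS τ (r + 1) = (τ (r + 1)).size + lenS τ r / 2 := rfl

theorem SE_zero (τ : ℕ → TTree (Option (GVar n N))) (k : ℕ) :
    SE τ 0 k = outE 0 [] (τ 0) k := by
  rw [SE.eq_def]
  rcases Nat.eq_zero_or_pos k with rfl | hk1
  · rw [outE_zero]; simp
  · by_cases h2 : lenS τ 0 < k
    · have hk0 : ¬ k = 0 := by omega
      rw [outE_big 0 [] (τ 0) k hk1 (by rw [← lenS_zero]; exact h2)]
      simp [h2, hk0]
    · have hk0 : ¬ k = 0 := by omega
      simp [h2, hk0]

theorem SE_succ (τ : ℕ → TTree (Option (GVar n N))) (r k : ℕ)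
    (h1 : 1 ≤ k) (h2 : k ≤ lenS τ (r + 1)) :
    SE τ (r + 1) k = .lit (GVar.s (r + 1) k) true := by
  have hk0 : ¬ k = 0 := by omega
  rw [SE.eq_def]
  simp [Nat.not_lt.2 h2, hk0]

theorem SE_big (τ : ℕ → TTree (Option (GVar n N))) (r k : ℕ)
    (h1 : 1 ≤ k) (h2 : lenS τ r < k) : SE τ r k = .fls := by
  have hk0 : ¬ k = 0 := by omega
  rw [SE.eq_def]
  simp [h2, hk0]

theorem SE_ne_fls {τ : ℕ → TTree (Option (GVar n N))} {r k : ℕ}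
    (h : k ≤ lenS τ r) : SE τ r k ≠ .fls := by
  cases r with
  | zero => rw [SE_zero]; exact outE_ne_fls (by rw [← lenS_zero]; exact h)
  | succ r =>
    rcases Nat.eq_zero_or_pos k with rfl | hk1
    · rw [SE_zero' _ _ _ rfl]; simp
    · rw [SE_succ _ _ _ hk1 h]; simp

end Stmt16Aux
namespace Stmt16Aux

section UPside

variable {n N : ℕ} (q : Fin n → ℕ) (grp : Fin n → Fin N) (p m : ℕ)
  (τ : ℕ → TTree (Option (GVar n N)))
  (F : CnfForm (GVar n N)) (A : Set (Lit (GVar n N)))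

def fUP : Option (GVar n N) → Prop := fun o => ∀ v ∈ o, UP F A (v, true)

theorem up_tot (hF : GGPW q grp p m τ ⊆ F) :
    ∀ (t : TTree (Option (GVar n N))) (r : ℕ) (pa : List Bool), r ≤ p →
      TTree.sub pa (τ r) = some t → ∀ k, k ≤ cntT (fUP F A) t →
      EUP F A (outE r pa t k) := by
  intro t
  induction t with
  | leaf a =>
    intro r pa hr hsub k hk
    rcases Nat.eq_zero_or_pos k with rfl | hk1
    · rw [outE_zero]; trivial
    · rw [cntT_leaf] at hk
      by_cases ha : fUP F A a
      · rw [if_pos ha] at hk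
        have hk2 : k = 1 := by omega
        subst hk2
        cases a with
        | none => rw [outE_leaf_none]; trivial
        | some v => rw [outE_leaf_some]; exact ha v rfl
      · rw [if_neg ha] at hk; omega
  | node L R ihL ihR =>
    intro r pa hr hsub k hk
    rcases Nat.eq_zero_or_pos k with rfl | hk1
    · rw [outE_zero]; trivial
    rw [cntT_node] at hk
    have hcL := cntT_le_size (fUP F A) L
    have hcR := cntT_le_size (fUP F A) R
    set α := min k (cntT (fUP F A) L) with hαdef
    have hα1 : α ≤ cntT (fUP F A) L := min_le_right _ _
    have hαL : α ≤ L.size := hα1.trans hcL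
    have hβ1 : k - α ≤ cntT (fUP F A) R := by omega
    have hβR : k - α ≤ R.size := hβ1.trans hcR
    have hsL : TTree.sub (pa ++ [false]) (τ r) = some L := by
      simpa using sub_child hsub false
    have hsR : TTree.sub (pa ++ [true]) (τ r) = some R := by
      simpa using sub_child hsub true
    have e1 := ihL r (pa ++ [false]) hr hsL α hα1
    have e2 := ihR r (pa ++ [true]) hr hsR (k - α) hβ1
    have hk' : α + (k - α) = k := by omega
    have hkn : k ≤ (TTree.node L R).size := by
      simp only [TTree.size]; omega
    have h3 := up_step3 (F := F) (A := A)
      (e1 := outE r (pa ++ [false]) L α) (e2 := outE r (pa ++ [true]) R (k - α))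
      (e3 := outE r pa (.node L R) (α + (k - α)))
      (fun C hC => hF (Or.inr (Or.inl ⟨r, pa, L, R, α, k - α, hr, hsub, hαL, hβR, hC⟩)))
      e1 e2 (by rw [hk']; exact outE_ne_fls hkn)
    rwa [hk'] at h3

noncomputable def cUP : ℕ → ℕ := fun r => cntT (fUP F A) (τ r)

theorem dval_cnt_le_lenS (g : Option (GVar n N) → Prop) (r : ℕ) :
    dval (fun j => cntT g (τ j)) r ≤ lenS τ r := by
  induction r with
  | zero => exact cntT_le_size _ _
  | succ r ih =>
    rw [lenS_succ]
    exact Nat.add_le_add (cntT_le_size _ _) (Nat.div_le_div_right ih)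

theorem up_S (hF : GGPW q grp p m τ ⊆ F) :
    ∀ r, r ≤ p → ∀ k, k ≤ dval (cUP τ F A) r → EUP F A (SE τ r k) := by
  intro r
  induction r with
  | zero =>
    intro hr k hk
    rw [SE_zero]
    exact up_tot q grp p m τ F A hF (τ 0) 0 [] hr rfl k hk
  | succ r ih =>
    intro hr k hk
    rcases Nat.eq_zero_or_pos k with rfl | hk1
    · rw [SE_zero' _ _ _ rfl]; trivial
    have hklen : k ≤ lenS τ (r + 1) := hk.trans (dval_cnt_le_lenS τ _ _)
    have hdval : dval (cUP τ F A) (r + 1) = cUP τ F A (r + 1) + dval (cUP τ F A) r / 2 := rfl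
    rw [hdval] at hk
    set α := min k (cUP τ F A (r + 1)) with hαdef
    have hα1 : α ≤ cUP τ F A (r + 1) := min_le_right _ _
    have hαs : α ≤ (τ (r + 1)).size := hα1.trans (cntT_le_size _ _)
    have hβ1 : k - α ≤ dval (cUP τ F A) r / 2 := by omega
    have hβlen : k - α ≤ lenS τ r / 2 :=
      hβ1.trans (Nat.div_le_div_right (dval_cnt_le_lenS τ _ r))
    have h2β : 2 * (k - α) ≤ dval (cUP τ F A) r := by
      have h := Nat.div_mul_le_self (dval (cUP τ F A) r) 2
      omega
    have e1 := up_tot q grp p m τ F A hF (τ (r + 1)) (r + 1) [] hr rfl α hα1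
    have e2 := ih (by omega) (2 * (k - α)) h2β
    have hk' : α + (k - α) = k := by omega
    have h3 := up_step3 (F := F) (A := A)
      (e1 := outE (r + 1) [] (τ (r + 1)) α) (e2 := SE τ r (2 * (k - α)))
      (e3 := SE τ (r + 1) (α + (k - α)))
      (fun C hC => hF (Or.inr (Or.inr (Or.inr (Or.inl
        ⟨r + 1, α, k - α, Nat.le_add_left _ _, hr, hαs, by simpa using hβlen, by simpa using hC⟩)))))
      e1 e2 (by rw [hk']; exact SE_ne_fls hklen)
    rwa [hk'] at h3

end UPside

end Stmt16Aux
namespace Stmt16Aux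

section Count

variable {n N : ℕ} (q : Fin n → ℕ) (grp : Fin n → Fin N) (T : ℕ)
  (τ : ℕ → TTree (Option (GVar n N)))

theorem cnt_bucket (g : Option (GVar n N) → Prop) (hg : g none) (r : ℕ)
    (hb : (τ r).leafMS = bucket q grp T r) :
    cntT g (τ r) =
      ((Finset.univ.filter (fun i : Fin N => ∃ l, grp l = i ∧ (q l).testBit r)).filter
        (fun i => g (some (GVar.y i r)))).card
      + (if T.testBit r then 1 else 0) := by
  rw [cntT, hb, bucket, Multiset.countP_add]
  congr 1
  · rw [Multiset.countP_map]
    rfl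
  · split_ifs with h
    · show Multiset.countP g (none ::ₘ 0) = 1
      rw [Multiset.countP_cons, Multiset.countP_zero, if_pos hg]
    · exact Multiset.countP_zero g

theorem count_groups (r : ℕ) (P : Fin n → Prop)
    (hinj : ∀ l l', P l → P l' → grp l = grp l' → l = l') :
    (Finset.univ.filter (fun i : Fin N => ∃ l, grp l = i ∧ (q l).testBit r ∧ P l)).card
      = (Finset.univ.filter (fun l => P l ∧ (q l).testBit r)).card := by
  have himg : Finset.image grp (Finset.univ.filter (fun l => P l ∧ (q l).testBit r))
      = Finset.univ.filter (fun i : Fin N => ∃ l, grp l = i ∧ (q l).testBit r ∧ P l) := by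
    ext i
    simp only [Finset.mem_image, Finset.mem_filter, Finset.mem_univ, true_and]
    constructor
    · rintro ⟨l, ⟨hP, hbit⟩, rfl⟩; exact ⟨l, rfl, hbit, hP⟩
    · rintro ⟨l, rfl, hbit, hP⟩; exact ⟨l, ⟨hP, hbit⟩, rfl⟩
  rw [← himg, Finset.card_image_of_injOn]
  intro l hl l' hl' h
  simp only [Finset.coe_filter, Set.mem_setOf_eq] at hl hl'
  exact hinj l l' hl.2.1 hl'.2.1 h

theorem sum_cLB (p : ℕ) (S : Finset (Fin n)) (hT : T < 2 ^ (p + 1))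
    (hqlt : ∀ l, q l < 2 ^ (p + 1)) :
    ∑ j ∈ Finset.range (p + 1),
        2 ^ j * ((if T.testBit j then 1 else 0) + (S.filter (fun l => (q l).testBit j)).card)
      = T + ∑ l ∈ S, q l := by
  have h1 : ∀ j, 2 ^ j * ((if T.testBit j then 1 else 0)
        + (S.filter (fun l => (q l).testBit j)).card)
      = 2 ^ j * (if T.testBit j then 1 else 0)
        + ∑ l ∈ S, 2 ^ j * (if (q l).testBit j then 1 else 0) := by
    intro j
    rw [Nat.mul_add]
    congr 1
    rw [Finset.card_filter, Finset.mul_sum]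
  simp only [h1]
  rw [Finset.sum_add_distrib, bitsum hT, Finset.sum_comm]
  congr 1
  exact Finset.sum_congr rfl fun l _ => bitsum (hqlt l)

end Count

section KeyUp

variable {n N : ℕ} (q : Fin n → ℕ) (grp : Fin n → Fin N) (p m T K : ℕ)
  (τ : ℕ → TTree (Option (GVar n N)))
  (F : CnfForm (GVar n N)) (A : Set (Lit (GVar n N)))

theorem fUP_some' {v : GVar n N} (h : UP F A (v, true)) : fUP F A (some v) := by
  intro v' hv'
  obtain rfl : v = v' := by simpa using hv'
  exact h

theorem fUP_none : fUP F A (none : Option (GVar n N)) := by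
  intro v hv; simp at hv

theorem key_up
    (hτ : ∀ r ≤ p, (τ r).leafMS = bucket q grp T r)
    (hTlt : T < 2 ^ p) (hqlt : ∀ l, q l < 2 ^ (p + 1))
    (hKm : K + 1 + T = m * 2 ^ p)
    (hF : GGPW q grp p m τ ⊆ F)
    (S : Finset (Fin n))
    (hS : ∀ l ∈ S, UP F A (GVar.x l, true))
    (hinj : ∀ l ∈ S, ∀ l' ∈ S, grp l = grp l' → l = l')
    (hsum : K + 1 ≤ ∑ l ∈ S, q l) :
    UPFalsifies F A := by
  have hy : ∀ l ∈ S, ∀ r ≤ p, (q l).testBit r → UP F A (GVar.y (grp l) r, true) := by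
    intro l hl r hr hbit
    refine UP.unit (hF (Or.inl ⟨l, r, hr, hbit, rfl⟩)) (by simp) ?_
    rintro l' hl' hne
    rcases List.mem_cons.1 hl' with rfl | hl'
    · simpa [negLit] using hS l hl
    rcases List.mem_cons.1 hl' with rfl | hl'
    · exact absurd rfl hne
    · simp at hl'
  have hlb : ∀ r ≤ p, (if T.testBit r then 1 else 0)
      + (S.filter (fun l => (q l).testBit r)).card ≤ cUP τ F A r := by
    intro r hr
    rw [show cUP τ F A r = cntT (fUP F A) (τ r) from rfl,
      cnt_bucket q grp T τ (fUP F A) (fUP_none F A) r (hτ r hr)]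
    rw [Nat.add_comm]
    refine Nat.add_le_add_right ?_ _
    refine Finset.card_le_card_of_injOn grp ?_ ?_
    · intro l hl
      simp only [Finset.coe_filter, Set.mem_setOf_eq, Finset.mem_coe, Finset.mem_filter, Finset.mem_univ, true_and] at hl ⊢
      obtain ⟨hlS, hbit⟩ := hl
      exact ⟨⟨l, rfl, hbit⟩, fUP_some' F A (hy l hlS r hr hbit)⟩
    · intro l hl l' hl' h
      simp only [Finset.coe_filter, Set.mem_setOf_eq] at hl hl'
      exact hinj l hl.1 l' hl'.1 h
  have hT1 : T < 2 ^ (p + 1) := by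
    have h2 : (2:ℕ) ^ p < 2 ^ (p + 1) := Nat.pow_lt_pow_succ one_lt_two
    omega
  have hW : T + ∑ l ∈ S, q l ≤ ∑ j ∈ Finset.range (p + 1), 2 ^ j * cUP τ F A j := by
    rw [← sum_cLB q T p S hT1 hqlt]
    refine Finset.sum_le_sum fun j hj => Nat.mul_le_mul_left _ (hlb j ?_)
    simpa [Nat.lt_succ_iff] using Finset.mem_range.1 hj
  have hm' : m ≤ dval (cUP τ F A) p := by
    rw [dval_eq, Nat.le_div_iff_mul_le (Nat.pow_pos two_pos)]
    calc m * 2 ^ p = K + 1 + T := hKm.symm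
      _ ≤ T + ∑ l ∈ S, q l := by omega
      _ ≤ _ := hW
  exact upfalsifies_of_unit
    (fun C hC => hF (Or.inr (Or.inr (Or.inr (Or.inr (Or.inr hC))))))
    (up_S q grp p m τ F A hF p le_rfl m hm')

end KeyUp

end Stmt16Aux
namespace Stmt16Aux

section SatSide

variable {n N : ℕ} (q : Fin n → ℕ) (grp : Fin n → Fin N) (p m T : ℕ)
  (τ : ℕ → TTree (Option (GVar n N))) (vB : Fin n → Bool)

def ydef (i : Fin N) (r : ℕ) : Prop :=
  ∃ l, grp l = i ∧ (q l).testBit r ∧ vB l = true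

def vInp : Option (GVar n N) → Prop
  | none => True
  | some (GVar.y i r) => ydef q grp vB i r
  | some _ => False

noncomputable def baseB : GVar n N → Bool
  | .x l => vB l
  | .y i r => decide (ydef q grp vB i r)
  | .tot r pa k => decide (∃ t, TTree.sub pa (τ r) = some t ∧ k ≤ cntT (vInp q grp vB) t)
  | .s r k => decide (k ≤ dval (fun j => cntT (vInp q grp vB) (τ j)) r)

theorem evalE_outE (hb : ∀ r ≤ p, (τ r).leafMS = bucket q grp T r) :
    ∀ (t : TTree (Option (GVar n N))) (r : ℕ) (pa : List Bool) (k : ℕ), r ≤ p →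
      TTree.sub pa (τ r) = some t →
      (evalE (baseB q grp τ vB) (outE r pa t k) = true ↔ k ≤ cntT (vInp q grp vB) t) := by
  intro t r pa k hr hsub
  rcases Nat.eq_zero_or_pos k with rfl | hk1
  · simp [outE_zero, evalE]
  by_cases hbig : t.size < k
  · rw [outE_big _ _ _ _ hk1 hbig]
    have hcs := cntT_le_size (vInp q grp vB) t
    simp only [evalE, Bool.false_eq_true, false_iff]
    omega
  push_neg at hbig
  cases t with
  | leaf a =>
    have hsz : TTree.size (.leaf a : TTree (Option (GVar n N))) = 1 := rfl
    have hk2 : k = 1 := by omega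
    subst hk2
    have hmem : a ∈ bucket q grp T r := by
      have hle := sub_leafMS_le pa (τ r) _ hsub
      rw [hb r hr] at hle
      exact Multiset.mem_of_le hle (by simp [TTree.leafMS])
    rw [bucket] at hmem
    rcases Multiset.mem_add.1 hmem with hm | hm
    · obtain ⟨i, hi, rfl⟩ := Multiset.mem_map.1 hm
      rw [outE_leaf_some, cntT_leaf]
      have hinp : vInp q grp vB (some (GVar.y i r)) = ydef q grp vB i r := rfl
      by_cases hy : ydef q grp vB i r
      · simp [evalE, baseB, hy, hinp]
      · simp [evalE, baseB, hy, hinp]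
    · have hno : a = none := by
        by_cases hbit : T.testBit r
        · rw [if_pos hbit] at hm; simpa using hm
        · rw [if_neg hbit] at hm; simp at hm
      subst hno
      rw [outE_leaf_none, cntT_leaf]
      have hinp : vInp q grp vB (none : Option (GVar n N)) = True := rfl
      simp [evalE, hinp]
  | node L R =>
    rw [outE_node _ _ _ _ _ hk1 hbig]
    simp only [evalE, baseB, beq_true, decide_eq_true_eq]
    constructor
    · rintro ⟨t', hsub', hle⟩
      rw [hsub] at hsub'
      cases hsub'
      exact hle
    · intro h; exact ⟨_, hsub, h⟩

theorem evalE_SE (hb : ∀ r ≤ p, (τ r).leafMS = bucket q grp T r) :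
    ∀ (r k : ℕ), r ≤ p →
      (evalE (baseB q grp τ vB) (SE τ r k) = true
        ↔ k ≤ dval (fun j => cntT (vInp q grp vB) (τ j)) r) := by
  intro r k hr
  cases r with
  | zero =>
    rw [SE_zero]
    exact evalE_outE q grp p T τ vB hb (τ 0) 0 [] k hr rfl
  | succ r =>
    rcases Nat.eq_zero_or_pos k with rfl | hk1
    · simp [SE_zero' _ _ _ rfl, evalE]
    by_cases hbig : lenS τ (r + 1) < k
    · rw [SE_big _ _ _ hk1 hbig]
      have hd := dval_cnt_le_lenS τ (vInp q grp vB) (r + 1)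
      simp only [evalE, Bool.false_eq_true, false_iff]
      omega
    · rw [SE_succ _ _ _ hk1 (by omega)]
      simp [evalE, baseB]

theorem sat_base {K : ℕ} (hb : ∀ r ≤ p, (τ r).leafMS = bucket q grp T r)
    (hPB : (∑ l, if vB l then q l else 0) ≤ K)
    (hTlt : T < 2 ^ p) (hqlt : ∀ l, q l < 2 ^ (p + 1))
    (hKm : K + 1 + T = m * 2 ^ p) :
    ∀ C ∈ GGPW q grp p m τ, satClause (baseB q grp τ vB) C := by
  intro C hC
  have hOE := evalE_outE q grp p T τ vB hb
  have hSE := evalE_SE q grp p T τ vB hb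
  simp only [GGPW, Set.mem_setOf_eq] at hC
  rcases hC with ⟨l, r, hr, hbit, rfl⟩ | ⟨r, pa, L, R, α, β, hr, hsub, hα, hβ, hmk⟩ |
    ⟨r, pa, L, R, α, β, hr, hsub, hα, hβ, hmk⟩ | ⟨r, α, β, hr1, hr, hα, hβ, hmk⟩ |
    ⟨r, α, β, hr1, hr, hα, hβ, hmk⟩ | hmk
  · -- y definition clauses
    by_cases hvb : vB l = true
    · refine ⟨(GVar.y (grp l) r, true), by simp, ?_⟩
      show baseB q grp τ vB (GVar.y (grp l) r) = true
      simpa [baseB] using ⟨l, rfl, hbit, hvb⟩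
    · refine ⟨(GVar.x l, false), by simp, ?_⟩
      show baseB q grp τ vB (GVar.x l) = false
      simpa [baseB] using hvb
  · -- totalizer direction 1
    apply mkClause_sat hmk
    have hsL : TTree.sub (pa ++ [false]) (τ r) = some L := by simpa using sub_child hsub false
    have hsR : TTree.sub (pa ++ [true]) (τ r) = some R := by simpa using sub_child hsub true
    by_cases h1 : evalE (baseB q grp τ vB) (outE r (pa ++ [false]) L α) = true
    · by_cases h2 : evalE (baseB q grp τ vB) (outE r (pa ++ [true]) R β) = true
      · refine ⟨outE r pa (.node L R) (α + β), by simp, ?_⟩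
        rw [hOE _ r pa _ hr hsub, cntT_node]
        have e1 := (hOE L r _ α hr hsL).1 h1
        have e2 := (hOE R r _ β hr hsR).1 h2
        omega
      · exact ⟨(outE r (pa ++ [true]) R β).neg, by simp, by rw [evalE_neg]; simp [h2]⟩
    · exact ⟨(outE r (pa ++ [false]) L α).neg, by simp, by rw [evalE_neg]; simp [h1]⟩
  · -- totalizer direction 2
    apply mkClause_sat hmk
    have hsL : TTree.sub (pa ++ [false]) (τ r) = some L := by simpa using sub_child hsub false
    have hsR : TTree.sub (pa ++ [true]) (τ r) = some R := by simpa using sub_child hsub true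
    by_cases h3 : evalE (baseB q grp τ vB) (outE r pa (.node L R) (α + β + 1)) = true
    · have hcnt := (hOE _ r pa _ hr hsub).1 h3
      rw [cntT_node] at hcnt
      rcases Nat.lt_or_ge (cntT (vInp q grp vB) L) (α + 1) with hL | hL
      · refine ⟨outE r (pa ++ [true]) R (β + 1), by simp, ?_⟩
        rw [hOE R r _ _ hr hsR]
        omega
      · refine ⟨outE r (pa ++ [false]) L (α + 1), by simp, ?_⟩
        rw [hOE L r _ _ hr hsL]
        omega
    · exact ⟨(outE r pa (.node L R) (α + β + 1)).neg, by simp, by rw [evalE_neg]; simp [h3]⟩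
  · -- adder direction 1
    apply mkClause_sat hmk
    obtain ⟨r', rfl⟩ : ∃ r', r = r' + 1 := ⟨r - 1, by omega⟩
    simp only [Nat.add_sub_cancel]
    by_cases h1 : evalE (baseB q grp τ vB) (outE (r' + 1) [] (τ (r' + 1)) α) = true
    · by_cases h2 : evalE (baseB q grp τ vB) (SE τ r' (2 * β)) = true
      · refine ⟨SE τ (r' + 1) (α + β), by simp, ?_⟩
        rw [hSE (r' + 1) _ hr]
        have e1 := (hOE _ (r' + 1) [] α hr rfl).1 h1
        have e2 := (hSE r' _ (by omega)).1 h2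
        have hdv : dval (fun j => cntT (vInp q grp vB) (τ j)) (r' + 1)
            = cntT (vInp q grp vB) (τ (r' + 1))
              + dval (fun j => cntT (vInp q grp vB) (τ j)) r' / 2 := rfl
        rw [hdv]
        omega
      · exact ⟨(SE τ r' (2 * β)).neg, by simp, by rw [evalE_neg]; simp [h2]⟩
    · exact ⟨(outE (r' + 1) [] (τ (r' + 1)) α).neg, by simp, by rw [evalE_neg]; simp [h1]⟩
  · -- adder direction 2
    apply mkClause_sat hmk
    obtain ⟨r', rfl⟩ : ∃ r', r = r' + 1 := ⟨r - 1, by omega⟩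
    simp only [Nat.add_sub_cancel]
    by_cases h3 : evalE (baseB q grp τ vB) (SE τ (r' + 1) (α + β + 1)) = true
    · have hcnt := (hSE (r' + 1) _ hr).1 h3
      have hdv : dval (fun j => cntT (vInp q grp vB) (τ j)) (r' + 1)
          = cntT (vInp q grp vB) (τ (r' + 1))
            + dval (fun j => cntT (vInp q grp vB) (τ j)) r' / 2 := rfl
      rw [hdv] at hcnt
      rcases Nat.lt_or_ge (cntT (vInp q grp vB) (τ (r' + 1))) (α + 1) with hL | hL
      · refine ⟨SE τ r' (2 * (β + 1)), by simp, ?_⟩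
        rw [hSE r' _ (by omega)]
        have hd2 := Nat.div_mul_le_self (dval (fun j => cntT (vInp q grp vB) (τ j)) r') 2
        have : β + 1 ≤ dval (fun j => cntT (vInp q grp vB) (τ j)) r' / 2 := by omega
        omega
      · refine ⟨outE (r' + 1) [] (τ (r' + 1)) (α + 1), by simp, ?_⟩
        rw [hOE _ (r' + 1) [] _ hr rfl]
        omega
    · exact ⟨(SE τ (r' + 1) (α + β + 1)).neg, by simp, by rw [evalE_neg]; simp [h3]⟩
  · -- the unit clause ¬w
    apply mkClause_sat hmk
    refine ⟨(SE τ p m).neg, by simp, ?_⟩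
    rw [evalE_neg]
    -- show evalE (SE τ p m) = false, i.e. dval < m
    have hub : ∀ r ≤ p, cntT (vInp q grp vB) (τ r) ≤ (if T.testBit r then 1 else 0)
        + ((Finset.univ.filter (fun l => vB l = true)).filter (fun l => (q l).testBit r)).card := by
      intro r hrp
      rw [cnt_bucket q grp T τ (vInp q grp vB) trivial r (hb r hrp)]
      have hcard : ((Finset.univ.filter (fun i : Fin N => ∃ l, grp l = i ∧ (q l).testBit r)).filter
            (fun i => vInp q grp vB (some (GVar.y i r)))).card
          ≤ ((Finset.univ.filter (fun l => vB l = true)).filter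
              (fun l => (q l).testBit r)).card := by
        refine Finset.card_le_card_of_surjOn grp ?_
        intro i hi
        simp only [Finset.coe_filter, Set.mem_setOf_eq, Finset.mem_filter, Finset.mem_univ,
          true_and] at hi
        obtain ⟨l, rfl, hbit, hvl⟩ := hi.2
        exact ⟨l, by simp [hvl, hbit], rfl⟩
      omega
    have hT1 : T < 2 ^ (p + 1) := by
      have h2 : (2:ℕ) ^ p < 2 ^ (p + 1) := Nat.pow_lt_pow_succ one_lt_two
      omega
    have hWle : ∑ j ∈ Finset.range (p + 1), 2 ^ j * cntT (vInp q grp vB) (τ j)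
        ≤ T + ∑ l ∈ Finset.univ.filter (fun l => vB l = true), q l := by
      rw [← sum_cLB q T p (Finset.univ.filter (fun l => vB l = true)) hT1 hqlt]
      refine Finset.sum_le_sum fun j hj => Nat.mul_le_mul_left _ (hub j ?_)
      simpa [Nat.lt_succ_iff] using Finset.mem_range.1 hj
    have hsum : ∑ l ∈ Finset.univ.filter (fun l => vB l = true), q l
        = ∑ l, if vB l then q l else 0 := by
      rw [Finset.sum_filter]
    have hdlt : dval (fun j => cntT (vInp q grp vB) (τ j)) p < m := by
      rw [dval_eq, Nat.div_lt_iff_lt_mul (Nat.pow_pos two_pos)]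
      calc ∑ j ∈ Finset.range (p + 1), 2 ^ j * cntT (vInp q grp vB) (τ j)
          ≤ T + ∑ l ∈ Finset.univ.filter (fun l => vB l = true), q l := hWle
        _ < m * 2 ^ p := by rw [hsum]; omega
    have hfalse : ¬ (evalE (baseB q grp τ vB) (SE τ p m) = true) := by
      rw [hSE p m le_rfl]
      omega
    simp [Bool.not_eq_true] at hfalse
    simp [hfalse]

end SatSide

end Stmt16Aux
namespace Stmt16Aux

theorem satClause_congr {V : Type} {B1 B2 : V → Bool} {C : Clause V}
    (h : ∀ l ∈ C, B1 l.1 = B2 l.1) : satClause B1 C → satClause B2 C := by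
  rintro ⟨l, hl, hs⟩
  exact ⟨l, hl, by rw [satLit, ← h l hl]; exact hs⟩

theorem hinj_of {n N : ℕ} (grp : Fin n → Fin N) (Bb : GVar n N → Bool)
    (hamo : ∀ i : Fin N,
      (Finset.univ.filter (fun l => grp l = i ∧ Bb (GVar.x l) = true)).card ≤ 1)
    (l l' : Fin n) (h1 : Bb (GVar.x l) = true) (h2 : Bb (GVar.x l') = true)
    (hg : grp l = grp l') : l = l' := by
  have hc := Finset.card_le_one.1 (hamo (grp l))
  exact hc l (by simp [Finset.mem_filter, h1]) l' (by simp [Finset.mem_filter, h2, hg])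

end Stmt16Aux

open Stmt16Aux
theorem stmt16 {n N : ℕ} (q : Fin n → ℕ) (K : ℕ) (hn : 1 ≤ n)
    (hq : ∀ l, 1 ≤ q l ∧ q l ≤ K)
    (grp : Fin n → Fin N)
    (p T m : ℕ)
    (hp : p = Nat.log 2 (Finset.univ.sup q))
    -- `T` is the smallest nonnegative integer such that `K + 1 + T` is a multiple of `2^p`:
    (hT : T = (2 ^ p - (K + 1) % 2 ^ p) % 2 ^ p)
    (hm : m = (K + 1 + T) / 2 ^ p)
    (τ : ℕ → TTree (Option (GVar n N)))
    -- the leaves of the totalizer tree for bit `r` are exactly the bucket `B_r`: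
    (hτ : ∀ r ≤ p, (τ r).leafMS = bucket q grp T r)
    (H : CnfForm (GVar n N))
    -- the auxiliary variables of `H` are disjoint from those of the GGPW encoding:
    (hauxdisj : ∀ v, v ∈ cnfVars H → v ∈ cnfVars (GGPW q grp p m τ) →
      v ∈ Set.range (GVar.x : Fin n → GVar n N))
    -- `H` is a CC encoding of the conjunction of the AMO constraints:
    (hH : IsCC H (Set.range (GVar.x : Fin n → GVar n N))
      (fun B => ∀ i : Fin N,
        (Finset.univ.filter (fun l => grp l = i ∧ B (GVar.x l) = true)).card ≤ 1)) :
    IsCC (GGPW q grp p m τ ∪ H) (Set.range (GVar.x : Fin n → GVar n N))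
      (fun B => ((∑ l, if B (GVar.x l) then q l else 0) ≤ K) ∧
        ∀ i : Fin N,
          (Finset.univ.filter (fun l => grp l = i ∧ B (GVar.x l) = true)).card ≤ 1) := by
  have h2p : 0 < 2 ^ p := Nat.pow_pos two_pos
  have hqlt : ∀ l, q l < 2 ^ (p + 1) := by
    intro l
    refine lt_of_le_of_lt (Finset.le_sup (Finset.mem_univ l)) ?_
    rw [hp]
    exact Nat.lt_pow_succ_log_self one_lt_two _
  have hTlt : T < 2 ^ p := by rw [hT]; exact Nat.mod_lt _ h2p
  have hdvd : 2 ^ p ∣ K + 1 + T := by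
    apply Nat.dvd_of_mod_eq_zero
    have halt : (K + 1) % 2 ^ p < 2 ^ p := Nat.mod_lt _ h2p
    rcases Nat.eq_zero_or_pos ((K + 1) % 2 ^ p) with h0 | hpos
    · have hT0 : T = 0 := by rw [hT, h0, Nat.sub_zero, Nat.mod_self]
      rw [hT0, Nat.add_zero, h0]
    · have hTval : T = 2 ^ p - (K + 1) % 2 ^ p := by
        rw [hT]; exact Nat.mod_eq_of_lt (by omega)
      have h1 : (K + 1 + T) % 2 ^ p = ((K + 1) % 2 ^ p + T % 2 ^ p) % 2 ^ p :=
        Nat.add_mod _ _ _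
      rw [h1, Nat.mod_eq_of_lt hTlt, (by omega : (K + 1) % 2 ^ p + T = 2 ^ p), Nat.mod_self]
  have hKm : K + 1 + T = m * 2 ^ p := by rw [hm]; exact (Nat.div_mul_cancel hdvd).symm
  constructor
  · -- IsEncoding
    intro B
    constructor
    · rintro ⟨hPB, hAMO⟩
      obtain ⟨B'', hB''agree, hB''sat⟩ := (hH.1 B).1 hAMO
      refine ⟨fun v =>
        if v ∈ cnfVars H ∧ v ∉ Set.range (GVar.x : Fin n → GVar n N) then B'' v
        else baseB q grp τ (fun l => B (GVar.x l)) v, ?_, ?_⟩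
      · rintro v ⟨l, rfl⟩
        dsimp only
        rw [if_neg (by simp)]
        rfl
      · intro C hC
        rcases hC with hCG | hCH
        · have hs := sat_base q grp p m T τ (fun l => B (GVar.x l)) hτ hPB hTlt hqlt hKm C hCG
          refine satClause_congr ?_ hs
          rintro ⟨v, b⟩ hl
          have hv : v ∈ cnfVars (GGPW q grp p m τ) := ⟨C, hCG, b, hl⟩
          dsimp only
          split_ifs with h
          · exact absurd (hauxdisj v h.1 hv) h.2
          · rfl
        · refine satClause_congr ?_ (hB''sat C hCH)
          rintro ⟨v, b⟩ hl
          have hv : v ∈ cnfVars H := ⟨C, hCH, b, hl⟩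
          dsimp only
          by_cases hx : v ∈ Set.range (GVar.x : Fin n → GVar n N)
          · obtain ⟨j, rfl⟩ := hx
            rw [if_neg (by simp), hB''agree _ ⟨j, rfl⟩]
            rfl
          · rw [if_pos ⟨hv, hx⟩]
    · rintro ⟨B', hagree, hsat⟩
      have hsatH : satCnf B' H := fun C hC => hsat C (Or.inr hC)
      have hAMO := (hH.1 B).2 ⟨B', hagree, hsatH⟩
      refine ⟨?_, hAMO⟩
      by_contra hgt
      push_neg at hgt
      have heq : ∀ l : Fin n, B' (GVar.x l) = B (GVar.x l) := fun l => hagree _ ⟨l, rfl⟩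
      have hsum : K + 1 ≤
          ∑ l ∈ Finset.univ.filter (fun l => B' (GVar.x l) = true), q l := by
        have h1 : ∑ l ∈ Finset.univ.filter (fun l => B' (GVar.x l) = true), q l
            = ∑ l, if B' (GVar.x l) = true then q l else 0 := Finset.sum_filter _ _
        have h2 : (∑ l, if B' (GVar.x l) = true then q l else 0)
            = ∑ l, if B (GVar.x l) = true then q l else 0 :=
          Finset.sum_congr rfl fun l _ => by rw [heq l]
        omega
      have hinj : ∀ l ∈ Finset.univ.filter (fun l => B' (GVar.x l) = true),
          ∀ l' ∈ Finset.univ.filter (fun l => B' (GVar.x l) = true),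
          grp l = grp l' → l = l' := by
        intro l hl l' hl' hg
        refine hinj_of grp B hAMO l l' ?_ ?_ hg
        · rw [← heq l]; exact (Finset.mem_filter.1 hl).2
        · rw [← heq l']; exact (Finset.mem_filter.1 hl').2
      have hfal := key_up q grp p m T K τ (GGPW q grp p m τ ∪ H) {l | satLit B' l}
        hτ hTlt hqlt hKm Set.subset_union_left _
        (fun l hl => UP.base (show satLit B' (GVar.x l, true) by simpa [satLit] using hl)) hinj hsum
      obtain ⟨C, hC, hall⟩ := hfal
      obtain ⟨l, hl, hs⟩ := hsat C hC
      have hneg := sat_of_up hsat (fun l hl => hl) (hall l hl)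
      simp only [satLit, negLit] at hneg hs
      rw [hs] at hneg
      exact absurd hneg (by simp)
  · -- consistency checker property
    intro A hcons hscope hnoext
    by_cases hamo : ∃ B0 : GVar n N → Bool, ExtendsPA A B0 ∧ ∀ i : Fin N,
        (Finset.univ.filter (fun l => grp l = i ∧ B0 (GVar.x l) = true)).card ≤ 1
    · obtain ⟨B0, hB0ext, hB0amo⟩ := hamo
      have hSB0 : ∀ l ∈ Finset.univ.filter (fun l : Fin n => (GVar.x l, true) ∈ A),
          B0 (GVar.x l) = true := fun l hl => hB0ext _ (Finset.mem_filter.1 hl).2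
      have hinj : ∀ l ∈ Finset.univ.filter (fun l : Fin n => (GVar.x l, true) ∈ A),
          ∀ l' ∈ Finset.univ.filter (fun l : Fin n => (GVar.x l, true) ∈ A),
          grp l = grp l' → l = l' := fun l hl l' hl' hg =>
        hinj_of grp B0 hB0amo l l' (hSB0 l hl) (hSB0 l' hl') hg
      have hB1ext : ExtendsPA A (fun v => decide ((v, true) ∈ A)) := by
        rintro ⟨v, b⟩ hvb
        cases b
        · show decide ((v, true) ∈ A) = false
          rw [decide_eq_false_iff_not]
          exact fun h => hcons v ⟨h, hvb⟩
        · show decide ((v, true) ∈ A) = true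
          rw [decide_eq_true_eq]
          exact hvb
      have hAMO1 : ∀ i : Fin N, (Finset.univ.filter
          (fun l => grp l = i ∧ decide ((GVar.x l, true) ∈ A) = true)).card ≤ 1 := by
        intro i
        refine le_trans (Finset.card_le_card ?_) (hB0amo i)
        intro l hl
        simp only [Finset.mem_filter, Finset.mem_univ, true_and,
          decide_eq_true_eq] at hl ⊢
        exact ⟨hl.1, hB0ext _ hl.2⟩
      have hPB1 : ¬ ((∑ l, if decide ((GVar.x l, true) ∈ A) = true then q l else 0) ≤ K) :=
        fun h => hnoext ⟨fun v => decide ((v, true) ∈ A), hB1ext, h, hAMO1⟩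
      have hsum : K + 1 ≤
          ∑ l ∈ Finset.univ.filter (fun l : Fin n => (GVar.x l, true) ∈ A), q l := by
        have h1 : ∑ l ∈ Finset.univ.filter (fun l : Fin n => (GVar.x l, true) ∈ A), q l
            = ∑ l, if (GVar.x l, true) ∈ A then q l else 0 := Finset.sum_filter _ _
        have h2 : (∑ l, if (GVar.x l, true) ∈ A then q l else 0)
            = ∑ l, if decide ((GVar.x l, true) ∈ A) = true then q l else 0 :=
          Finset.sum_congr rfl fun l _ => by simp
        omega
      exact key_up q grp p m T K τ (GGPW q grp p m τ ∪ H) A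
        hτ hTlt hqlt hKm Set.subset_union_left _
        (fun l hl => UP.base (by simpa using hl)) hinj hsum
    · obtain ⟨C, hC, hall⟩ := hH.2 A hcons hscope
        (fun ⟨B0, hext, hB0⟩ => hamo ⟨B0, hext, hB0⟩)
      exact ⟨C, Or.inr hC, fun l hl => up_mono Set.subset_union_right (hall l hl)⟩
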